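/- arXiv:1905.00165 — 7 statements merged into one kernel-verified Lean document; each statement's English description precedes it below -/
import Mathlib

section
/- Let K be an n×n complex matrix and p a determinantal point process with marginal kernel K. Let a : Fin n be an index with K a a ≠ 1 and B a finset of Fin n with a ∉ B. Then the sum of p(S) over all finsets S with B ⊆ S and a ∉ S equals (1 − K a a) · det(K_B − (K a a − 1)⁻¹ · K_{B,{a}} · K_{{a},B}). -/
/-!
By inclusion–exclusion on the event `a ∈ S`, the probability equals `det K_B - det K_{B ∪ {a}}`.
Write `K_{B ∪ {a}}` in block form with corner `K a a = (K a a - 1) + 1`; linearity of the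
determinant in the last row splits off `det K_B`, and the Schur complement of the remaining
invertible corner `K a a - 1` gives `(K a a - 1) · det (K_B - (K a a - 1)⁻¹ K_{B,a} K_{a,B})`.
-/

open Matrix

/-- The submatrix of `K` with rows indexed by `A` and columns indexed by `B`. -/
def kSub {n : ℕ} (K : Matrix (Fin n) (Fin n) ℂ) (A B : Finset (Fin n)) :
    Matrix A B ℂ :=
  Matrix.of fun i j => K i j

/-- `p` is a determinantal point process with marginal kernel `K`:
`p` is a probability mass function on finsets of `Fin n` and for every finset `Y`
the probability that `Y` is contained in the sample equals `det (K_Y)`. -/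
def IsDPP {n : ℕ} (K : Matrix (Fin n) (Fin n) ℂ) (p : Finset (Fin n) → ℝ) : Prop :=
  (∀ S, 0 ≤ p S) ∧ (∑ S : Finset (Fin n), p S = 1) ∧
    ∀ Y : Finset (Fin n),
      ((∑ S ∈ Finset.univ.filter fun S => Y ⊆ S, p S : ℝ) : ℂ) =
        (kSub K Y Y).det

theorem Finset.sum_filter_subset_and_notMem {α M : Type*} [Fintype α] [DecidableEq α]
    [AddCommGroup M] (f : Finset α → M) (B : Finset α) (a : α) :
    ∑ S ∈ univ.filter (fun S => B ⊆ S ∧ a ∉ S), f S =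
      ∑ S ∈ univ.filter (fun S => B ⊆ S), f S -
        ∑ S ∈ univ.filter (fun S => B ∪ {a} ⊆ S), f S := by
  rw [eq_sub_iff_add_eq, ← sum_filter_add_sum_filter_not (univ.filter (B ⊆ ·)) (a ∉ ·),
    filter_filter, filter_filter]
  congr 2
  ext S
  simp [insert_subset_iff, and_comm]

namespace Matrix

variable {m o R : Type*} [Fintype m] [Fintype o] [DecidableEq m] [DecidableEq o]

theorem det_fromBlocks_smul_one₂₂ {𝕜 : Type*} [Field 𝕜] (A : Matrix m m 𝕜) (B : Matrix m o 𝕜)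
    (C : Matrix o m 𝕜) {c : 𝕜} (hc : c ≠ 0) :
    (fromBlocks A B C (c • 1)).det = c ^ Fintype.card o * (A - c⁻¹ • (B * C)).det := by
  let _ : Invertible (c • 1 : Matrix o o 𝕜) :=
    invertibleOfLeftInverse _ (c⁻¹ • 1) (by simp [smul_smul, hc])
  have hinv : ⅟(c • 1 : Matrix o o 𝕜) = c⁻¹ • 1 := rfl
  rw [det_fromBlocks₂₂, hinv, det_smul, det_one, mul_one, Matrix.mul_smul, Matrix.mul_one,
    Matrix.smul_mul]

theorem det_fromBlocks_add_one₂₂ [CommRing R] [Unique o] (A : Matrix m m R) (B : Matrix m o R)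
    (C : Matrix o m R) (D : Matrix o o R) :
    (fromBlocks A B C (D + 1)).det = (fromBlocks A B C D).det + A.det := by
  set i : m ⊕ o := Sum.inr default
  have hrow : fromBlocks A B C (D + 1) =
      (fromBlocks A B C D).updateRow i (fromBlocks A B C D i + fromBlocks A B 0 1 i) := by
    ext (j | j) (k | k) <;> simp [i, updateRow_apply, Unique.eq_default (α := o)]
  have hlast : (fromBlocks A B C D).updateRow i (fromBlocks A B 0 1 i) = fromBlocks A B 0 1 := by
    ext (j | j) (k | k) <;> simp [i, updateRow_apply, Unique.eq_default (α := o)]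
  rw [hrow, det_updateRow_add, updateRow_eq_self, hlast, det_fromBlocks_zero₂₁, det_one, mul_one]

end Matrix

theorem det_kSub_union {n : ℕ} (K : Matrix (Fin n) (Fin n) ℂ) {s t : Finset (Fin n)}
    (h : Disjoint s t) :
    (kSub K (s ∪ t) (s ∪ t)).det =
      (fromBlocks (kSub K s s) (kSub K s t) (kSub K t s) (kSub K t t)).det := by
  rw [← det_submatrix_equiv_self (Equiv.Finset.union s t h)]
  congr 1
  ext (i | i) (j | j) <;> rfl

theorem kSub_singleton_self {n : ℕ} (K : Matrix (Fin n) (Fin n) ℂ) (a : Fin n) :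
    kSub K {a} {a} = K a a • 1 := by
  ext ⟨i, hi⟩ ⟨j, hj⟩
  rw [Finset.mem_singleton] at hi hj
  subst hi hj
  simp [kSub]

theorem stmt_5 {n : ℕ} (K : Matrix (Fin n) (Fin n) ℂ) (p : Finset (Fin n) → ℝ)
    (hp : IsDPP K p) (a : Fin n) (ha : K a a ≠ 1) (B : Finset (Fin n))
    (haB : a ∉ B) :
    ((∑ S ∈ Finset.univ.filter fun S => B ⊆ S ∧ a ∉ S, p S : ℝ) : ℂ) =
      (1 - K a a) *
        (kSub K B B - (K a a - 1)⁻¹ • (kSub K B {a} * kSub K {a} B)).det := by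
  obtain ⟨-, -, hmarg⟩ := hp
  have hcorner : kSub K {a} {a} = (K a a - 1) • 1 + 1 := by
    rw [kSub_singleton_self, sub_smul, one_smul, sub_add_cancel]
  rw [Finset.sum_filter_subset_and_notMem, Complex.ofReal_sub, hmarg, hmarg,
    det_kSub_union K (Finset.disjoint_singleton_right.2 haB), hcorner,
    det_fromBlocks_add_one₂₂, det_fromBlocks_smul_one₂₂ _ _ _ (sub_ne_zero.2 ha),
    Fintype.card_unique, pow_one]
  ring
end

section
/- Let K be an n×n complex matrix and p a determinantal point process with marginal kernel K. Let A and B be disjoint finsets of Fin n such that the matrix K_A − I (I the identity matrix of size |A|) is invertible. Then the sum of p(S) over all finsets S with B ⊆ S and A ∩ S = ∅ equals (−1)^{|A|} · det(K_A − I) · det(K_B − K_{B,A} · (K_A − I)⁻¹ · K_{A,B}). -/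
/-
Inclusion–exclusion over `T ⊆ A` turns the probability of `{B ⊆ S, A ∩ S = ∅}` into the
alternating sum `∑_{T ⊆ A} (-1)^|T| det K_{B ∪ T}`. Expanding `det (M + diagonal d)` row by row
(multilinearity) gives `∑_s (∏_{i ∉ s} d i) det M_s`; with `d = -1` on `A` and `d = 0` on `B`
this identifies the alternating sum with `(-1)^|A| det [[K_A - I, K_{A,B}], [K_{B,A}, K_B]]`,
and the Schur complement formula for that block matrix finishes the proof.
-/
open Matrix

open Finset

theorem kSub_eq_submatrix {n : ℕ} (K : Matrix (Fin n) (Fin n) ℂ) (A B : Finset (Fin n)) :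
    kSub K A B = K.submatrix (↑) (↑) :=
  rfl

section

variable {α R : Type*} [DecidableEq α] [CommRing R]

theorem sum_powerset_filter_subset_neg_one_pow_card (A S : Finset α) :
    ∑ T ∈ A.powerset with T ⊆ S, (-1 : R) ^ T.card = if Disjoint A S then 1 else 0 := by
  have hfilter : {T ∈ A.powerset | T ⊆ S} = (A ∩ S).powerset := by
    ext T; simp only [mem_filter, mem_powerset, subset_inter_iff]
  simpa [hfilter, disjoint_iff_inter_eq_empty, apply_ite (Int.cast : ℤ → R)] using
    congrArg (Int.cast : ℤ → R) (sum_powerset_neg_one_pow_card (x := A ∩ S))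

theorem sum_superset_disjoint_eq_alternating_sum [Fintype α] (f : Finset α → R)
    (A B : Finset α) :
    ∑ S with B ⊆ S ∧ Disjoint A S, f S =
      ∑ T ∈ A.powerset, (-1) ^ T.card * ∑ S with B ∪ T ⊆ S, f S := by
  simp_rw [mul_sum, sum_filter, union_subset_iff]
  rw [sum_comm]
  refine sum_congr rfl fun S _ => ?_
  by_cases hB : B ⊆ S
  · simp only [hB, true_and]
    rw [← sum_filter, ← sum_mul, sum_powerset_filter_subset_neg_one_pow_card, ite_mul,
      one_mul, zero_mul]
  · simp [hB]

theorem neg_one_pow_card_mul_neg_one_pow_card_sdiff {A T : Finset α} (hT : T ⊆ A) :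
    (-1 : R) ^ A.card * (-1) ^ (A \ T).card = (-1) ^ T.card := by
  rw [← card_sdiff_add_card_eq_card hT, pow_add, mul_right_comm, ← mul_pow, neg_one_mul,
    neg_neg, one_pow, one_mul]

end

namespace Matrix

variable {ι R : Type*} [DecidableEq ι] [CommRing R]

theorem det_add_diagonal [Fintype ι] (M : Matrix ι ι R) (d : ι → R) :
    (M + diagonal d).det =
      ∑ s : Finset ι, (∏ i ∈ sᶜ, d i) * (M.submatrix ((↑) : s → ι) (↑)).det := by
  change detRowAlternating (M.row + (diagonal d).row) = _
  rw [AlternatingMap.map_add_univ]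
  refine sum_congr rfl fun s _ => ?_
  have hrows : s.piecewise M.row (diagonal d).row =
      fun i => (if i ∈ s then 1 else d i) • s.piecewise M.row (1 : Matrix ι ι R).row i := by
    funext i j
    by_cases hi : i ∈ s <;> simp [Finset.piecewise, hi, Matrix.row, diagonal_apply, one_apply]
  have hprod : ∏ i, (if i ∈ s then 1 else d i) = ∏ i ∈ sᶜ, d i := by
    simp [prod_ite, filter_not, compl_eq_univ_sdiff]
  rw [hrows, AlternatingMap.map_smul_univ, hprod, smul_eq_mul,
    ← det_piecewise_one_eq_submatrix_det]
  rfl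

theorem det_submatrix_add_diagonal (M : Matrix ι ι R) (d : ι → R) (U : Finset ι) :
    ((M + diagonal d).submatrix ((↑) : U → ι) (↑)).det =
      ∑ s ∈ U.powerset, (∏ i ∈ U \ s, d i) * (M.submatrix ((↑) : s → ι) (↑)).det := by
  let e : U ↪ ι := Function.Embedding.subtype _
  have hsub : (M + diagonal d).submatrix ((↑) : U → ι) (↑) =
      M.submatrix (↑) (↑) + diagonal (d ∘ (↑)) :=
    congrArg (M.submatrix _ _ + ·) (submatrix_diagonal_embedding d e)
  rw [hsub, det_add_diagonal]
  refine sum_nbij' (·.map e) (·.subtype (· ∈ U))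
    (fun s _ => mem_powerset.mpr (map_subtype_subset s)) (by simp) (fun s _ => ?_)
    (fun t ht => ?_) (fun s _ => ?_)
  · ext; simp [e]
  · ext; simpa [e] using fun h => mem_powerset.mp ht h
  · have hcompl : U \ s.map e = sᶜ.map e := by ext; simp [e]; aesop
    rw [hcompl, prod_map]
    exact congrArg _ (det_submatrix_equiv_self (s.equivMap e) (M.submatrix (↑) (↑)))

theorem neg_one_pow_card_mul_det_submatrix_union_sub_diagonal (M : Matrix ι ι R)
    {A B : Finset ι} (hAB : Disjoint A B) :
    (-1) ^ A.card * ((M - diagonal fun i => if i ∈ A then 1 else 0).submatrix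
        ((↑) : (A ∪ B : Finset ι) → ι) ((↑) : (A ∪ B : Finset ι) → ι)).det =
      ∑ T ∈ A.powerset, (-1) ^ T.card * (M.submatrix ((↑) : (B ∪ T : Finset ι) → ι) (↑)).det := by
  set d : ι → R := fun i => -if i ∈ A then 1 else 0
  set g : Finset ι → R :=
    fun s => (∏ i ∈ (A ∪ B) \ s, d i) * (M.submatrix ((↑) : s → ι) (↑)).det
  have himage : A.powerset.image (B ∪ ·) ⊆ (A ∪ B).powerset := image_subset_iff.mpr
    fun T hT => mem_powerset.mpr ((union_subset_union_right (mem_powerset.mp hT)).trans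
      (union_comm B A).subset)
  have hvanish : ∀ s ∈ (A ∪ B).powerset, s ∉ A.powerset.image (B ∪ ·) → g s = 0 := by
    intro s hs hsT
    obtain ⟨i, hiB, his⟩ : ∃ i ∈ B, i ∉ s := by
      by_contra! hB
      refine hsT (mem_image.mpr ⟨s \ B, mem_powerset.mpr ?_, union_sdiff_of_subset hB⟩)
      exact sdiff_le_iff.mpr ((mem_powerset.mp hs).trans (union_comm A B).subset)
    refine mul_eq_zero_of_left (prod_eq_zero (i := i) (by simp [hiB, his]) ?_) _
    simp [d, disjoint_right.mp hAB hiB]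
  have hinj : Set.InjOn (B ∪ ·) (A.powerset : Set (Finset ι)) := by
    intro T₁ h₁ T₂ h₂ h
    have hdisj : ∀ T ∈ (A.powerset : Set (Finset ι)), Disjoint B T :=
      fun T hT => hAB.symm.mono_right (mem_powerset.mp hT)
    rw [← union_sdiff_cancel_left (hdisj T₁ h₁), ← union_sdiff_cancel_left (hdisj T₂ h₂)]
    exact congrArg (· \ B) h
  rw [sub_eq_add_neg, diagonal_neg, det_submatrix_add_diagonal,
    ← sum_subset himage hvanish, sum_image hinj, mul_sum]
  refine sum_congr rfl fun T hT => ?_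
  replace hT : T ⊆ A := mem_powerset.mp hT
  have hdiff : (A ∪ B) \ (B ∪ T) = A \ T := by
    ext i
    have : i ∈ A → i ∉ B := fun h => disjoint_left.mp hAB h
    simp only [mem_sdiff, mem_union]
    tauto
  simp only [g]
  rw [hdiff, prod_congr rfl fun i hi => (by simp [d, (mem_sdiff.mp hi).1] : d i = -1),
    prod_const, ← mul_assoc, neg_one_pow_card_mul_neg_one_pow_card_sdiff hT]

theorem det_submatrix_union_sub_diagonal_eq_det_fromBlocks (M : Matrix ι ι R)
    {A B : Finset ι} (hAB : Disjoint A B) :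
    ((M - diagonal fun i => if i ∈ A then 1 else 0).submatrix
        ((↑) : (A ∪ B : Finset ι) → ι) ((↑) : (A ∪ B : Finset ι) → ι)).det =
      (fromBlocks (M.submatrix ((↑) : A → ι) ((↑) : A → ι) - 1)
        (M.submatrix ((↑) : A → ι) ((↑) : B → ι)) (M.submatrix ((↑) : B → ι) ((↑) : A → ι))
        (M.submatrix ((↑) : B → ι) ((↑) : B → ι))).det := by
  rw [← det_submatrix_equiv_self (Equiv.Finset.union A B hAB)]
  congr 1
  ext (i | i) (j | j)
  · simp [diagonal_apply, one_apply]
  · have hij : (i : ι) ≠ j := fun h => disjoint_left.mp hAB i.2 (h ▸ j.2)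
    simp [hij]
  · simp [diagonal_apply, disjoint_right.mp hAB i.2]
  · simp [diagonal_apply, disjoint_right.mp hAB i.2]

end Matrix

theorem stmt_6 {n : ℕ} (K : Matrix (Fin n) (Fin n) ℂ) (p : Finset (Fin n) → ℝ)
    (hp : IsDPP K p) (A B : Finset (Fin n)) (hAB : Disjoint A B)
    (hA : IsUnit (kSub K A A - 1)) :
    ((∑ S ∈ Finset.univ.filter fun S => B ⊆ S ∧ A ∩ S = ∅, p S : ℝ) : ℂ) =
      (-1 : ℂ) ^ A.card * (kSub K A A - 1).det *
        (kSub K B B - kSub K B A * (kSub K A A - 1)⁻¹ * kSub K A B).det := by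
  obtain ⟨-, -, hmarginal⟩ := hp
  have := hA.invertible
  calc ((∑ S with B ⊆ S ∧ A ∩ S = ∅, p S : ℝ) : ℂ)
      = ∑ S with B ⊆ S ∧ Disjoint A S, (p S : ℂ) := by
        push_cast [disjoint_iff_inter_eq_empty]; rfl
    _ = ∑ T ∈ A.powerset, (-1) ^ T.card * (kSub K (B ∪ T) (B ∪ T)).det := by
        simp_rw [sum_superset_disjoint_eq_alternating_sum, ← hmarginal]; push_cast; rfl
    _ = (-1) ^ A.card * (fromBlocks (kSub K A A - 1) (kSub K A B) (kSub K B A)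
          (kSub K B B)).det := by
        simp only [kSub_eq_submatrix]
        rw [← det_submatrix_union_sub_diagonal_eq_det_fromBlocks K hAB,
          neg_one_pow_card_mul_det_submatrix_union_sub_diagonal K hAB]
    _ = _ := by rw [det_fromBlocks₁₁, invOf_eq_nonsing_inv, mul_assoc]
end

section
/- Let K be an n×n complex matrix and p a determinantal point process with marginal kernel K. Then for every finset A of Fin n, the sum of p(S) over all finsets S with A ∩ S = ∅ equals det(I − K_A), where I is the identity matrix of size |A|. -/
/-!
Both sides are the same alternating sum over `Y ⊆ A`. Inclusion–exclusion writes the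
probability that the sample avoids `A` as `∑ Y ⊆ A, (-1)^|Y| P(Y ⊆ S)`, and for a DPP
`P(Y ⊆ S) = det K_Y`. Multilinearity of the determinant in its rows expands `det (1 - K_A)`
as the signed sum `∑ Y ⊆ A, (-1)^|Y| det K_Y` of the principal minors of `K_A`.
-/

open Matrix

open Finset

theorem Finset.sum_filter_inter_eq_empty_eq_sum_powerset {α G : Type*} [Fintype α]
    [DecidableEq α] [AddCommGroup G] (p : Finset α → G) (A : Finset α) :
    ∑ S with A ∩ S = ∅, p S =
      ∑ Y ∈ A.powerset, (-1 : ℤ) ^ #Y • ∑ S with Y ⊆ S, p S := by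
  have hcount (S : Finset α) :
      ∑ Y ∈ A.powerset with Y ⊆ S, (-1 : ℤ) ^ #Y = if A ∩ S = ∅ then 1 else 0 := by
    rw [show {Y ∈ A.powerset | Y ⊆ S} = (A ∩ S).powerset by
      ext; simp only [mem_filter, mem_powerset, subset_inter_iff]]
    exact sum_powerset_neg_one_pow_card
  calc ∑ S with A ∩ S = ∅, p S
      = ∑ S, (∑ Y ∈ A.powerset with Y ⊆ S, (-1 : ℤ) ^ #Y) • p S := by
        simp [hcount, ite_smul, sum_ite]
    _ = _ := by
        simp_rw [sum_filter, smul_sum, smul_ite, smul_zero, sum_smul, ite_smul, zero_smul]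
        exact sum_comm

namespace Matrix

variable {R : Type*} [CommRing R]

theorem det_one_add_eq_sum_principal_minors {ι : Type*} [Fintype ι] [DecidableEq ι]
    (M : Matrix ι ι R) :
    det (1 + M) = ∑ s : Finset ι, (M.submatrix (Subtype.val : s → ι) Subtype.val).det := by
  rw [add_comm]
  exact (detRowAlternating.map_add_univ M.row (1 : Matrix ι ι R).row).trans
    (sum_congr rfl fun s _ => det_piecewise_one_eq_submatrix_det M s)

theorem det_one_sub_eq_sum_principal_minors {ι : Type*} [Fintype ι] [DecidableEq ι]
    (M : Matrix ι ι R) :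
    det (1 - M) =
      ∑ s : Finset ι, (-1) ^ #s * (M.submatrix (Subtype.val : s → ι) Subtype.val).det := by
  simp [sub_eq_add_neg, det_one_add_eq_sum_principal_minors, submatrix_neg, det_neg]

variable {α : Type*} [DecidableEq α]

theorem det_submatrix_subtype_subtype (M : Matrix α α R) {A Y : Finset α} (hY : Y ⊆ A) :
    ((M.submatrix (Subtype.val : A → α) Subtype.val).submatrix
        (Subtype.val : Y.subtype (· ∈ A) → A) Subtype.val).det =
      (M.submatrix (Subtype.val : Y → α) Subtype.val).det := by
  let e : Y.subtype (· ∈ A) ≃ Y :=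
    { toFun a := ⟨a.1, mem_subtype.1 a.2⟩
      invFun y := ⟨⟨y, hY y.2⟩, mem_subtype.2 y.2⟩ }
  exact det_submatrix_equiv_self e (M.submatrix (Subtype.val : Y → α) Subtype.val)

theorem det_one_sub_submatrix_eq_sum_powerset (M : Matrix α α R) (A : Finset α) :
    det (1 - M.submatrix (Subtype.val : A → α) Subtype.val) =
      ∑ Y ∈ A.powerset, (-1) ^ #Y * (M.submatrix (Subtype.val : Y → α) Subtype.val).det := by
  rw [det_one_sub_eq_sum_principal_minors]
  symm
  refine sum_nbij' (fun Y => Y.subtype (· ∈ A)) (fun s => s.map (.subtype _))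
    (fun _ _ => mem_univ _)
    (fun s _ => mem_powerset.2 fun _ => property_of_mem_map_subtype s)
    (fun Y hY => subtype_map_of_mem (mem_powerset.1 hY))
    (fun s _ => by ext; simp) (fun Y hY => ?_)
  rw [card_subtype, filter_true_of_mem (mem_powerset.1 hY),
    det_submatrix_subtype_subtype M (mem_powerset.1 hY)]

end Matrix

theorem stmt_8 {n : ℕ} (K : Matrix (Fin n) (Fin n) ℂ) (p : Finset (Fin n) → ℝ)
    (hp : IsDPP K p) (A : Finset (Fin n)) :
    ((∑ S ∈ Finset.univ.filter fun S => A ∩ S = ∅, p S : ℝ) : ℂ) =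
      (1 - kSub K A A).det := by
  obtain ⟨-, -, hmarg⟩ := hp
  rw [sum_filter_inter_eq_empty_eq_sum_powerset, Complex.ofReal_sum]
  change _ = det (1 - K.submatrix Subtype.val Subtype.val)
  rw [det_one_sub_submatrix_eq_sum_powerset]
  refine sum_congr rfl fun Y _ => ?_
  rw [Complex.ofReal_zsmul, hmarg Y, zsmul_eq_mul]
  push_cast
  rfl
end

section
/- For every n×n complex matrix K and every finset J of Fin n, det(K − 𝟙_J) = ∑_{T ⊆ J} (−1)^{|T|} · det(K_{Tᶜ}), where T ranges over all finsets contained in J, Tᶜ denotes the complement of T in Fin n, and K_{Tᶜ} is the principal submatrix of K indexed by Tᶜ. -/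
open Matrix

/-- The diagonal 0/1 indicator matrix of a finset `J`. -/
def indMat {n : ℕ} (J : Finset (Fin n)) : Matrix (Fin n) (Fin n) ℂ :=
  Matrix.diagonal fun i => if i ∈ J then 1 else 0

/-! Expanding the determinant multilinearly in the rows indexed by `J`, each row of `K - 𝟙_J`
there splits as the row of `K` plus `-eᵢ`. The term in which exactly the rows in `T` are `-eᵢ`
is, after pulling out the scalars, block triangular with an identity block on `T`, hence equals
`(-1)^|T|` times the principal minor of `K` on `Tᶜ`. -/

namespace Matrix

variable {n R : Type*} [Fintype n] [DecidableEq n] [CommRing R]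

theorem det_piecewise_diagonal_eq_prod_mul_det_submatrix (M : Matrix n n R) (d : n → R)
    (s : Finset n) :
    det (of (s.piecewise (diagonal d).row M.row)) =
      (∏ i ∈ s, d i) * (M.submatrix (↑) (↑) : Matrix ↥sᶜ ↥sᶜ R).det := by
  have hfactor : of (s.piecewise (diagonal d).row M.row) =
      diagonal (fun i => if i ∈ s then d i else 1) *
        of (sᶜ.piecewise M.row (1 : Matrix n n R).row) := by
    ext i j
    by_cases hi : i ∈ s <;> simp [diagonal_mul, Finset.piecewise, hi, diagonal_apply, one_apply]
  rw [hfactor, det_mul, det_diagonal, Finset.prod_ite_mem, Finset.univ_inter,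
    det_piecewise_one_eq_submatrix_det]

theorem det_add_diagonal_ite_eq_sum_powerset (M : Matrix n n R) (d : n → R) (J : Finset n) :
    det (M + diagonal (fun i => if i ∈ J then d i else 0)) =
      ∑ s ∈ J.powerset, (∏ i ∈ s, d i) * (M.submatrix (↑) (↑) : Matrix ↥sᶜ ↥sᶜ R).det := by
  have hrows : M + diagonal (fun i => if i ∈ J then d i else 0) =
      of (J.piecewise ((diagonal d).row + M.row) M.row) := by
    ext i j
    by_cases hi : i ∈ J <;>
      simp [Finset.piecewise, hi, diagonal_apply, Pi.single_apply, eq_comm, add_comm]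
  rw [hrows, ← Finset.sum_congr rfl fun s _ =>
    det_piecewise_diagonal_eq_prod_mul_det_submatrix M d s]
  exact detRowAlternating.map_piecewise_add _ _ J

end Matrix

theorem stmt_11 {n : ℕ} (K : Matrix (Fin n) (Fin n) ℂ) (J : Finset (Fin n)) :
    (K - indMat J).det =
      ∑ T ∈ J.powerset, (-1 : ℂ) ^ T.card * (kSub K Tᶜ Tᶜ).det := by
  have hsub : K - indMat J = K + diagonal (fun i => if i ∈ J then -1 else 0) := by
    simp [indMat, sub_eq_add_neg, apply_ite]
  rw [hsub, det_add_diagonal_ite_eq_sum_powerset]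
  simp only [Finset.prod_const]
  rfl
end

section
/- Let K be an n×n complex matrix, p a determinantal point process with marginal kernel K, and a : Fin n an index with K a a ≠ 0. Let B = Fin n \ {a}, and define the Schur complement K' = K_B − (K a a)⁻¹ · K_{B,{a}} · K_{{a},B}, a matrix indexed by B. Then for every finset Y with a ∉ Y, the sum of p(S) over all finsets S with Y ∪ {a} ⊆ S equals K a a · det(K'_Y). In other words, the conditional law of 𝐘 \ {a} given a ∈ 𝐘 is a determinantal point process on the ground set Fin n \ {a} with marginal kernel K'. -/
/-!
By the DPP property the left-hand side is `det K_{insert a Y}`. Expanding this determinant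
along the pivot `K a a` (the Schur complement formula for a `1 × 1` block) factors it as
`K a a` times the determinant of the Schur complement `K'` restricted to `Y`.
-/

open Matrix

/-- Restriction of a matrix indexed by a finset `B` to a finset `Y ⊆ B`. -/
def kRestrict {n : ℕ} {B : Finset (Fin n)} (M : Matrix B B ℂ) (Y : Finset (Fin n))
    (h : Y ⊆ B) : Matrix Y Y ℂ :=
  Matrix.of fun i j => M ⟨i, h i.2⟩ ⟨j, h j.2⟩

namespace Matrix

variable {ι α 𝕜 : Type*} [Field 𝕜]

theorem det_option_eq_mul_det_schur [Fintype ι] [DecidableEq ι]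
    (M : Matrix (Option ι) (Option ι) 𝕜) (h : M none none ≠ 0) :
    M.det = M none none * (of fun i j : ι =>
      M (some i) (some j) - (M none none)⁻¹ * M (some i) none * M none (some j)).det := by
  set D : Matrix Unit Unit 𝕜 := of fun _ _ => M none none
  have hD : D.det = M none none := det_unique D
  let := invertibleOfNonzero (hD ▸ h)
  let := invertibleOfDetInvertible D
  have hD_inv : ⅟D = (M none none)⁻¹ • 1 := by
    rw [invOf_eq, adjugate_subsingleton, invOf_eq_inv, hD]
  have hblocks : M = (fromBlocks (of fun i j => M (some i) (some j)) (of fun i _ => M (some i) none)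
      (of fun _ j => M none (some j)) D).submatrix
      (Equiv.optionEquivSumPUnit.{0} ι) (Equiv.optionEquivSumPUnit.{0} ι) := by
    ext (_ | i) (_ | j) <;> rfl
  conv_lhs => rw [hblocks, det_submatrix_equiv_self, det_fromBlocks₂₂, hD, hD_inv]
  congr 2
  ext i j
  simp [mul_apply]

theorem det_submatrix_insert_eq_mul_det_schur [DecidableEq α] (K : Matrix α α 𝕜) {a : α}
    {Y : Finset α} (hY : a ∉ Y) (ha : K a a ≠ 0) :
    (K.submatrix ((↑) : ↥(insert a Y) → α) (↑)).det =
      K a a * (of fun i j : Y => K i j - (K a a)⁻¹ * K i a * K a j).det := by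
  rw [← det_submatrix_equiv_self (Finset.subtypeInsertEquivOption hY).symm,
    det_option_eq_mul_det_schur _ ha]
  rfl

end Matrix

theorem kRestrict_schurComplement {n : ℕ} (K : Matrix (Fin n) (Fin n) ℂ) {a : Fin n}
    {Y : Finset (Fin n)} (hY : Y ⊆ {a}ᶜ) :
    kRestrict (kSub K {a}ᶜ {a}ᶜ - (K a a)⁻¹ • (kSub K {a}ᶜ {a} * kSub K {a} {a}ᶜ)) Y hY =
      of fun i j : Y => K i j - (K a a)⁻¹ * K i a * K a j := by
  ext i j
  simp [kRestrict, kSub, mul_apply, mul_assoc]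

theorem stmt_14 {n : ℕ} (K : Matrix (Fin n) (Fin n) ℂ) (p : Finset (Fin n) → ℝ)
    (hp : IsDPP K p) (a : Fin n) (ha : K a a ≠ 0) :
    ∀ Y : Finset (Fin n), (hY : a ∉ Y) →
      ((∑ S ∈ Finset.univ.filter fun S => insert a Y ⊆ S, p S : ℝ) : ℂ) =
        K a a *
          (kRestrict
              (kSub K {a}ᶜ {a}ᶜ -
                (K a a)⁻¹ • (kSub K {a}ᶜ {a} * kSub K {a} {a}ᶜ))
              Y
              (by
                intro x hx
                simp only [Finset.mem_compl, Finset.mem_singleton]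
                rintro rfl
                exact hY hx)).det := by
  intro Y hY
  rw [hp.2.2, kRestrict_schurComplement]
  exact det_submatrix_insert_eq_mul_det_schur K hY ha
end

section
/- Let K be an n×n complex matrix that is Hermitian and idempotent (Kᴴ = K and K · K = K) with rank K = k, and let p be a determinantal point process with marginal kernel K. Then p is supported on finsets of cardinality exactly k: for every finset Y of Fin n with |Y| ≠ k, p(Y) = 0. -/
/-!
Summing the DPP identity over singletons and over ordered pairs `{i, j}` (including `i = j`)
gives the first two moments of the sample size in terms of principal minors of `K`:
`E |S| = tr K` and `E |S|² = (tr K)² - tr (K K) + tr K`. An idempotent matrix has trace equal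
to its rank, so `E |S| = k` and `E |S|² = k²`: the variance of `|S|` vanishes and every set
of positive probability has exactly `k` elements.
-/

open Matrix

open Finset

theorem Matrix.trace_eq_rank_of_isIdempotentElem {R m : Type*} [Field R] [Fintype m]
    [DecidableEq m] {A : Matrix m m R} (hA : IsIdempotentElem A) : A.trace = A.rank := by
  have hA' : IsIdempotentElem (toLin' A) := hA.map Matrix.toLinAlgEquiv'
  rw [← Matrix.trace_toLin'_eq, (LinearMap.IsIdempotentElem.isProj_range _ hA').trace]
  rfl

section Moments

variable {α R : Type*} [Fintype α] [DecidableEq α] [CommSemiring R] (p : Finset α → R)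

theorem sum_sum_filter_singleton_subset :
    ∑ i, ∑ S with {i} ⊆ S, p S = ∑ S, p S * #S := by
  simp_rw [sum_filter, singleton_subset_iff]
  rw [sum_comm]
  simp [sum_ite_mem, mul_comm]

theorem sum_sum_sum_filter_pair_subset :
    ∑ i, ∑ j, ∑ S with {i, j} ⊆ S, p S = ∑ S, p S * #S ^ 2 := by
  simp_rw [sum_filter, insert_subset_iff, singleton_subset_iff, ite_and]
  rw [sum_comm]
  simp_rw [sum_comm (s := univ (α := α)) (t := univ (α := Finset α))]
  refine sum_congr rfl fun S _ => ?_
  simp only [sum_ite_mem, univ_inter, sum_const, nsmul_eq_mul, ← mul_sum]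
  ring

end Moments

theorem eq_of_sum_mul_sq_eq_sq {ι : Type*} [Fintype ι] {p f : ι → ℝ} {m : ℝ}
    (hp : ∀ i, 0 ≤ p i) (h0 : ∑ i, p i = 1) (h1 : ∑ i, p i * f i = m)
    (h2 : ∑ i, p i * f i ^ 2 = m ^ 2) {i : ι} (hi : p i ≠ 0) : f i = m := by
  have hvar : ∑ j, p j * (f j - m) ^ 2 = 0 := by
    calc ∑ j, p j * (f j - m) ^ 2
        = ∑ j, p j * f j ^ 2 - 2 * m * ∑ j, p j * f j + m ^ 2 * ∑ j, p j := by
          simp only [mul_sum, ← sum_sub_distrib, ← sum_add_distrib]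
          exact sum_congr rfl fun j _ => by ring
      _ = 0 := by rw [h0, h1, h2]; ring
  have hterm := (sum_eq_zero_iff_of_nonneg fun j _ => mul_nonneg (hp j) (sq_nonneg _)).mp
    hvar i (mem_univ i)
  simpa [hi, sub_eq_zero] using hterm

section KSub

variable {n : ℕ} (K : Matrix (Fin n) (Fin n) ℂ)

theorem det_kSub_singleton (i : Fin n) : (kSub K {i} {i}).det = K i i :=
  Matrix.det_unique _

theorem det_kSub_pair {i j : Fin n} (hij : i ≠ j) :
    (kSub K {i, j} {i, j}).det = K i i * K j j - K i j * K j i := by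
  let e : Fin 2 ≃ ({i, j} : Finset (Fin n)) := by
    refine Equiv.ofBijective ![⟨i, by simp⟩, ⟨j, by simp⟩] ?_
    rw [Fintype.bijective_iff_injective_and_card]
    refine ⟨fun a b hab => ?_, by rw [Fintype.card_fin, Fintype.card_coe, card_pair hij]⟩
    fin_cases a <;> fin_cases b <;> simp_all
  rw [← det_submatrix_equiv_self e, det_fin_two]
  simp [e, kSub]

theorem sum_det_kSub_singleton : ∑ i, (kSub K {i} {i}).det = K.trace := by
  simp only [det_kSub_singleton]
  rfl

theorem sum_sum_det_kSub_pair :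
    ∑ i, ∑ j, (kSub K {i, j} {i, j}).det = K.trace ^ 2 - (K * K).trace + K.trace := by
  have hdet (i j : Fin n) : (kSub K {i, j} {i, j}).det =
      K i i * K j j - K i j * K j i + if i = j then K i i else 0 := by
    obtain rfl | hij := eq_or_ne i j
    · rw [pair_eq_singleton, det_kSub_singleton]
      simp
    · simp [det_kSub_pair K hij, hij]
  simp only [hdet, sum_add_distrib, sum_sub_distrib, sum_ite_eq, mem_univ, if_true,
    ← sum_mul_sum, trace, Matrix.diag, Matrix.mul_apply, sq]

end KSub

namespace IsDPP

variable {n : ℕ} {K : Matrix (Fin n) (Fin n) ℂ} {p : Finset (Fin n) → ℝ}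

theorem ofReal_sum_mul_card (hp : IsDPP K p) : ((∑ S, p S * #S : ℝ) : ℂ) = K.trace := by
  rw [← sum_det_kSub_singleton, ← sum_sum_filter_singleton_subset, Complex.ofReal_sum]
  simp only [hp.2.2]

theorem ofReal_sum_mul_card_sq (hp : IsDPP K p) :
    ((∑ S, p S * #S ^ 2 : ℝ) : ℂ) = K.trace ^ 2 - (K * K).trace + K.trace := by
  rw [← sum_sum_det_kSub_pair, ← sum_sum_sum_filter_pair_subset]
  simp only [← hp.2.2, Complex.ofReal_sum]

end IsDPP

theorem stmt_16_general {n : ℕ} (K : Matrix (Fin n) (Fin n) ℂ)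
    (hidem : K * K = K) (k : ℕ) (hrank : K.rank = k) (p : Finset (Fin n) → ℝ)
    (hp : IsDPP K p) :
    ∀ Y : Finset (Fin n), Y.card ≠ k → p Y = 0 := by
  intro Y hY
  have htrace : K.trace = k := hrank ▸ trace_eq_rank_of_isIdempotentElem hidem
  have hmean : ∑ S, p S * #S = k := by
    exact_mod_cast hp.ofReal_sum_mul_card.trans htrace
  have hsecond : ∑ S, p S * #S ^ 2 = (k : ℝ) ^ 2 := by
    have h := hp.ofReal_sum_mul_card_sq
    rw [hidem, htrace, sub_add_cancel] at h
    exact_mod_cast h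
  by_contra hpY
  exact hY (by exact_mod_cast eq_of_sum_mul_sq_eq_sq hp.1 hp.2.1 hmean hsecond hpY)

theorem stmt_16 {n : ℕ} (K : Matrix (Fin n) (Fin n) ℂ) (hH : K.IsHermitian)
    (hidem : K * K = K) (k : ℕ) (hrank : K.rank = k) (p : Finset (Fin n) → ℝ)
    (hp : IsDPP K p) :
    ∀ Y : Finset (Fin n), Y.card ≠ k → p Y = 0 :=
  stmt_16_general K hidem k hrank p hp
end

section
/- Let K be an n×n complex matrix that is Hermitian and idempotent (Kᴴ = K and K · K = K) with rank K = k, and let p be a determinantal point process with marginal kernel K. Then for every finset Y of Fin n with |Y| = k, the individual probability p(Y) (regarded as a complex number) equals det(K_Y); in particular det(K_Y) is a nonnegative real number. -/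
/-! Principal minors of `K` larger than `rank K` vanish, so the inclusion probability of any set
with more than `rank K` elements is zero, and by nonnegativity so is its individual probability.
For `|Y| = rank K`, the superset sum defining `P(Y ⊆ S)` therefore collapses to its term `p Y`. -/

open Matrix

theorem Matrix.card_le_rank_of_det_submatrix_ne_zero {m n ι R : Type*} [Fintype n]
    [Fintype ι] [DecidableEq ι] [CommRing R] [IsDomain R] (A : Matrix m n R) (r : ι → m)
    (c : ι → n) (h : (A.submatrix r c).det ≠ 0) : Fintype.card ι ≤ A.rank :=
  (rank_of_det_ne_zero h).symm.trans_le (rank_submatrix_le A r c)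

theorem Finset.sum_supersets_eq_self_of_eq_zero_of_card_lt {α M : Type*} [Fintype α]
    [DecidableEq α] [AddCommMonoid M] {f : Finset α → M} (Y : Finset α)
    (hf : ∀ S, Y.card < S.card → f S = 0) :
    ∑ S ∈ univ.filter (fun S => Y ⊆ S), f S = f Y := by
  refine sum_eq_single_of_mem Y (by simp) fun S hS hne => hf S ?_
  exact card_lt_card (ssubset_of_subset_of_ne (mem_filter.1 hS).2 hne.symm)

theorem det_kSub_eq_zero_of_rank_lt_card {n : ℕ} (K : Matrix (Fin n) (Fin n) ℂ)
    {S : Finset (Fin n)} (hS : K.rank < S.card) : (kSub K S S).det = 0 := by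
  by_contra h
  have := K.card_le_rank_of_det_submatrix_ne_zero ((↑) : S → Fin n) (↑) h
  rw [Fintype.card_coe] at this
  omega

namespace IsDPP

variable {n : ℕ} {K : Matrix (Fin n) (Fin n) ℂ} {p : Finset (Fin n) → ℝ}

theorem eq_zero_of_det_kSub_eq_zero (hp : IsDPP K p) {S : Finset (Fin n)}
    (hS : (kSub K S S).det = 0) : p S = 0 := by
  have hsum := hp.2.2 S
  rw [hS, Complex.ofReal_eq_zero] at hsum
  exact (Finset.sum_eq_zero_iff_of_nonneg fun T _ => hp.1 T).1 hsum S (by simp)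

theorem apply_eq_det_kSub_of_card_eq_rank (hp : IsDPP K p) {Y : Finset (Fin n)}
    (hY : Y.card = K.rank) : ((p Y : ℝ) : ℂ) = (kSub K Y Y).det := by
  rw [← hp.2.2 Y, Finset.sum_supersets_eq_self_of_eq_zero_of_card_lt Y]
  exact fun S hS => hp.eq_zero_of_det_kSub_eq_zero
    (det_kSub_eq_zero_of_rank_lt_card K (hY ▸ hS))

end IsDPP

theorem stmt_17_general {n : ℕ} (K : Matrix (Fin n) (Fin n) ℂ) (k : ℕ) (hrank : K.rank = k)
    (p : Finset (Fin n) → ℝ) (hp : IsDPP K p) :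
    ∀ Y : Finset (Fin n), Y.card = k →
      ((p Y : ℝ) : ℂ) = (kSub K Y Y).det ∧
        ∃ r : ℝ, 0 ≤ r ∧ (kSub K Y Y).det = r := by
  intro Y hY
  have hdet := hp.apply_eq_det_kSub_of_card_eq_rank (hY.trans hrank.symm)
  exact ⟨hdet, p Y, hp.1 Y, hdet.symm⟩

theorem stmt_17 {n : ℕ} (K : Matrix (Fin n) (Fin n) ℂ) (hH : K.IsHermitian)
    (hidem : K * K = K) (k : ℕ) (hrank : K.rank = k) (p : Finset (Fin n) → ℝ)
    (hp : IsDPP K p) :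
    ∀ Y : Finset (Fin n), Y.card = k →
      ((p Y : ℝ) : ℂ) = (kSub K Y Y).det ∧
        ∃ r : ℝ, 0 ≤ r ∧ (kSub K Y Y).det = r :=
  stmt_17_general K k hrank p hp
end
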